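/- For α > 0, n a natural number, and β ≥ 0: ∫_0^∞ e^{-α x} x^n J₀(β √x) dx = (n!/α^{n+1}) e^{-β²/(4α)} L_n(β²/(4α)), where L_n is the n-th Laguerre polynomial. -/

import Mathlib

/-!
Since `J₀(β √x) = ∑ₘ (-β²/4)ᵐ xᵐ / (m!)²` and `∫₀^∞ e^{-αx} xᵏ dx = k! / α^{k+1}`, integrating term
by term gives `n!/α^{n+1} ∑ₘ C(n+m, m) (-t)ᵐ / m!` with `t = β²/(4α)`; the interchange is justified
because the same computation with absolute values yields the convergent series at `-t`. That
series is the Cauchy product of `e^{-t} = ∑ₗ (-t)ˡ / l!` with `L_n(t) = ∑ₖ C(n, k) (-t)ᵏ / k!`.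
-/

open MeasureTheory Real

/-- Bessel function of order 0, via its power series. -/
noncomputable def besselJ0 (z : ℝ) : ℝ :=
  ∑' m : ℕ, (-1 : ℝ) ^ m * (z / 2) ^ (2 * m) / ((m.factorial : ℝ)) ^ 2

/-- Laguerre polynomial. -/
noncomputable def laguerre (n : ℕ) (x : ℝ) : ℝ :=
  ∑ k ∈ Finset.range (n + 1), (-1 : ℝ) ^ k * (n.choose k) * x ^ k / k.factorial

open Finset Nat

theorem integral_exp_neg_mul_mul_pow {a : ℝ} (ha : 0 < a) (k : ℕ) :
    ∫ x in Set.Ioi (0 : ℝ), exp (-a * x) * x ^ k = k ! / a ^ (k + 1) := by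
  have h := integral_rpow_mul_exp_neg_mul_Ioi (a := k + 1) (by positivity) ha
  rw [add_sub_cancel_right, Gamma_nat_eq_factorial, ← Nat.cast_add_one, rpow_natCast,
    one_div_pow] at h
  convert h using 1
  · refine setIntegral_congr_fun measurableSet_Ioi fun x _ ↦ ?_
    rw [rpow_natCast, neg_mul, mul_comm]
  · ring

theorem integrableOn_exp_neg_mul_mul_pow {a : ℝ} (ha : 0 < a) (k : ℕ) :
    IntegrableOn (fun x ↦ exp (-a * x) * x ^ k) (Set.Ioi 0) :=
  Integrable.of_integral_ne_zero <| by rw [integral_exp_neg_mul_mul_pow ha]; positivity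

theorem integral_exp_neg_mul_mul_pow_mul_tsum {α : ℝ} (hα : 0 < α) (n : ℕ) {a : ℕ → ℝ}
    (ha : Summable fun m ↦ |a m| * ((n + m)! / α ^ (n + m + 1))) :
    ∫ x in Set.Ioi (0 : ℝ), exp (-α * x) * x ^ n * ∑' m, a m * x ^ m =
      ∑' m, a m * ((n + m)! / α ^ (n + m + 1)) := by
  set F : ℕ → ℝ → ℝ := fun m x ↦ a m * (exp (-α * x) * x ^ (n + m))
  have hF_int (m : ℕ) : IntegrableOn (F m) (Set.Ioi 0) :=
    (integrableOn_exp_neg_mul_mul_pow hα (n + m)).const_mul (a m)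
  have hF_norm (m : ℕ) :
      ∫ x in Set.Ioi (0 : ℝ), ‖F m x‖ = |a m| * ((n + m)! / α ^ (n + m + 1)) := by
    rw [← integral_exp_neg_mul_mul_pow hα, ← integral_const_mul]
    refine setIntegral_congr_fun measurableSet_Ioi fun x hx ↦ ?_
    have hx : 0 < x := hx
    rw [norm_mul, norm_of_nonneg (by positivity : 0 ≤ exp (-α * x) * x ^ (n + m)), norm_eq_abs]
  calc ∫ x in Set.Ioi (0 : ℝ), exp (-α * x) * x ^ n * ∑' m, a m * x ^ m
      = ∫ x in Set.Ioi (0 : ℝ), ∑' m, F m x := by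
        congr 1 with x
        rw [← tsum_mul_left]
        congr 1 with m
        ring
    _ = ∑' m, ∫ x in Set.Ioi (0 : ℝ), F m x :=
        (integral_tsum_of_summable_integral_norm hF_int (by simpa only [hF_norm])).symm
    _ = ∑' m, a m * ((n + m)! / α ^ (n + m + 1)) := by
        simp only [F, integral_const_mul, integral_exp_neg_mul_mul_pow hα]

theorem besselJ0_mul_sqrt (β : ℝ) {x : ℝ} (hx : 0 ≤ x) :
    besselJ0 (β * √x) = ∑' m : ℕ, (-(β ^ 2 / 4)) ^ m / (m ! : ℝ) ^ 2 * x ^ m := by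
  refine tsum_congr fun m ↦ ?_
  rw [pow_mul, div_pow, mul_pow, sq_sqrt hx, neg_pow (β ^ 2 / 4)]
  ring

/-- The coefficients of the Cauchy product combine by Vandermonde's identity. -/
theorem hasSum_exp_neg_mul_laguerre (n : ℕ) (t : ℝ) :
    HasSum (fun m ↦ ((n + m).choose m : ℝ) * (-t) ^ m / m !) (exp (-t) * laguerre n t) := by
  set f : ℕ → ℝ := fun k ↦ (n.choose k : ℝ) * (-t) ^ k / (k !)
  set g : ℕ → ℝ := fun l ↦ (-t) ^ l / (l !)
  have hf_zero : ∀ k ∉ range (n + 1), f k = 0 := fun k hk ↦ by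
    simp [f, Nat.choose_eq_zero_of_lt (by simpa using hk : n < k)]
  have hf : Summable fun k ↦ ‖f k‖ :=
    summable_of_ne_finset_zero (s := range (n + 1)) fun k hk ↦ by simp [hf_zero k hk]
  have hg : Summable fun l ↦ ‖g l‖ := by
    simpa [g, norm_div, norm_pow] using summable_pow_div_factorial |t|
  have hlaguerre : laguerre n t = ∑' k, f k := by
    rw [tsum_eq_sum hf_zero]
    refine sum_congr rfl fun k _ ↦ ?_
    rw [neg_pow]
    ring
  have hterm (m : ℕ) :
      ∑ kl ∈ antidiagonal m, f kl.1 * g kl.2 = ((n + m).choose m : ℝ) * (-t) ^ m / m ! := by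
    rw [Nat.add_choose_eq, Nat.cast_sum, sum_mul, sum_div]
    refine sum_congr rfl fun ⟨k, l⟩ hkl ↦ ?_
    obtain rfl : k + l = m := mem_antidiagonal.mp hkl
    have hchoose : ((k + l).choose l : ℝ) ≠ 0 := by exact_mod_cast (Nat.choose_pos (by omega)).ne'
    rw [← Nat.add_choose_mul_factorial_mul_factorial k l]
    simp only [f, g]
    push_cast
    field_simp
    ring
  have hsum := (summable_norm_sum_mul_antidiagonal_of_summable_norm hf hg).of_norm
  rw [exp_eq_exp_ℝ, ← (NormedSpace.expSeries_div_hasSum_exp (-t)).tsum_eq, hlaguerre, mul_comm,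
    tsum_mul_tsum_eq_tsum_sum_antidiagonal_of_summable_norm hf hg]
  simp only [hterm] at hsum ⊢
  exact hsum.hasSum

theorem pow_div_factorial_sq_mul_factorial_div_pow {α : ℝ} (hα : α ≠ 0) (b : ℝ) (n m : ℕ) :
    b ^ m / (m ! : ℝ) ^ 2 * ((n + m)! / α ^ (n + m + 1)) =
      n ! / α ^ (n + 1) * ((n + m).choose m * (b / α) ^ m / m !) := by
  rw [← Nat.add_choose_mul_factorial_mul_factorial, div_pow]
  push_cast
  field_simp
  ring

theorem laplace_besselJ0_general (α β : ℝ) (n : ℕ) (hα : 0 < α) :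
    (∫ x in Set.Ioi (0 : ℝ), Real.exp (-α * x) * x ^ n * besselJ0 (β * Real.sqrt x)) =
      (n.factorial / α ^ (n + 1)) * Real.exp (-β ^ 2 / (4 * α)) *
        laguerre n (β ^ 2 / (4 * α)) := by
  set t := β ^ 2 / (4 * α)
  have ht : β ^ 2 / 4 / α = t := by rw [div_div]
  have hsummable : Summable fun m ↦
      |(-(β ^ 2 / 4)) ^ m / (m ! : ℝ) ^ 2| * ((n + m)! / α ^ (n + m + 1)) := by
    have := (hasSum_exp_neg_mul_laguerre n (-t)).summable.mul_left (n ! / α ^ (n + 1))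
    rw [neg_neg, ← ht] at this
    refine this.congr fun m ↦ ?_
    rw [abs_div, abs_pow, abs_neg, abs_of_nonneg (by positivity), abs_of_nonneg (by positivity),
      pow_div_factorial_sq_mul_factorial_div_pow hα.ne']
  calc ∫ x in Set.Ioi (0 : ℝ), exp (-α * x) * x ^ n * besselJ0 (β * √x)
      = ∫ x in Set.Ioi (0 : ℝ), exp (-α * x) * x ^ n *
          ∑' m : ℕ, (-(β ^ 2 / 4)) ^ m / (m ! : ℝ) ^ 2 * x ^ m :=
        setIntegral_congr_fun measurableSet_Ioi fun x hx ↦ by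
          rw [besselJ0_mul_sqrt β (Set.mem_Ioi.mp hx).le]
    _ = ∑' m : ℕ, (-(β ^ 2 / 4)) ^ m / (m ! : ℝ) ^ 2 * ((n + m)! / α ^ (n + m + 1)) :=
        integral_exp_neg_mul_mul_pow_mul_tsum hα n hsummable
    _ = n ! / α ^ (n + 1) * ∑' m : ℕ, ((n + m).choose m : ℝ) * (-t) ^ m / m ! := by
        simp only [pow_div_factorial_sq_mul_factorial_div_pow hα.ne', neg_div, ht, tsum_mul_left]
    _ = n ! / α ^ (n + 1) * exp (-β ^ 2 / (4 * α)) * laguerre n t := by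
        rw [(hasSum_exp_neg_mul_laguerre n t).tsum_eq, neg_div, mul_assoc]

theorem laplace_besselJ0 (α β : ℝ) (n : ℕ) (hα : 0 < α) (hβ : 0 ≤ β) :
    (∫ x in Set.Ioi (0 : ℝ), Real.exp (-α * x) * x ^ n * besselJ0 (β * Real.sqrt x)) =
      (n.factorial / α ^ (n + 1)) * Real.exp (-β ^ 2 / (4 * α)) *
        laguerre n (β ^ 2 / (4 * α)) :=
  laplace_besselJ0_general α β n hα
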